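/- Let G be a simple graph on a finite vertex type V with edge weights w : Sym2 V → ℝ, and let F be a minimum spanning forest of G. Then for every real threshold t, the number of edges of F of weight at most t equals the cardinality of V minus the number of connected components of G_{≤t}. In particular, the edges of F of weight at most t form a spanning forest of G_{≤t}. -/

import Mathlib

/-- `F` is a spanning forest of `H`: a spanning subgraph (edges a subset of those of `H`)
that is acyclic and has the same reachability relation as `H`. -/
def IsSpanningForest {V : Type*} (H F : SimpleGraph V) : Prop :=
  F ≤ H ∧ F.IsAcyclic ∧ ∀ u v : V, F.Reachable u v ↔ H.Reachable u v

/-- The total weight of the edges of a graph. -/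
noncomputable def totalWeight {V : Type*} (w : Sym2 V → ℝ) (F : SimpleGraph V) : ℝ :=
  ∑ᶠ e ∈ F.edgeSet, w e

/-- `F` is a minimum spanning forest of `H` with respect to the weights `w`. -/
def IsMSF {V : Type*} (w : Sym2 V → ℝ) (H F : SimpleGraph V) : Prop :=
  IsSpanningForest H F ∧
    ∀ F' : SimpleGraph V, IsSpanningForest H F' → totalWeight w F ≤ totalWeight w F'

/-- The spanning subgraph `G_{≤ t}` of `G` consisting of the edges of `G` of weight at most `t`. -/
def leSub {V : Type*} (w : Sym2 V → ℝ) (G : SimpleGraph V) (t : ℝ) : SimpleGraph V :=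
  SimpleGraph.fromEdgeSet {e ∈ G.edgeSet | w e ≤ t}

/-!
By the cycle property, every edge on the path of a minimum spanning forest `F` between the ends
of an edge `ab` of `G` weighs at most `w(ab)`: otherwise exchanging it for `ab` would produce a
lighter spanning forest. So the ends of every edge of `G_{≤t}` are already joined in `F_{≤t}`,
i.e. `F_{≤t}` is a spanning forest of `G_{≤t}`, and the count follows from
`#edges + #components = #vertices` for forests, proved by deleting edges one at a time (each is a
bridge, so each deletion adds exactly one component).
-/

namespace SimpleGraph

variable {V : Type*}

lemma Reachable.of_forall_adj {G K : SimpleGraph V} (h : ∀ ⦃u v⦄, G.Adj u v → K.Reachable u v)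
    {u v : V} (huv : G.Reachable u v) : K.Reachable u v := by
  obtain ⟨p⟩ := huv
  induction p with
  | nil => rfl
  | cons ha _ ih => exact (h ha).trans ih

lemma deleteEdges_sup_edge {F : SimpleGraph V} {x y : V} (h : F.Adj x y) :
    F.deleteEdges {s(x, y)} ⊔ edge x y = F := by
  rw [← edgeSet_inj, edgeSet_sup, edgeSet_deleteEdges, edgeSet_edge_of_ne h.ne,
    Set.sdiff_union_self]
  exact Set.union_eq_left.mpr (Set.singleton_subset_iff.mpr h)

lemma reachable_sup_edge_iff {H : SimpleGraph V} {x y u v : V} :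
    (H ⊔ edge x y).Reachable u v ↔ H.Reachable u v ∨
      (H.Reachable u x ∧ H.Reachable y v) ∨ (H.Reachable u y ∧ H.Reachable x v) := by
  constructor
  · rintro ⟨p⟩
    induction p with
    | nil => exact .inl .rfl
    | cons ha _ ih =>
      rw [sup_adj, edge_adj] at ha
      rcases ha with ha | ⟨⟨rfl, rfl⟩ | ⟨rfl, rfl⟩, -⟩
      · have := ha.reachable
        grind [Reachable.trans]
      all_goals grind [Reachable.refl]
  · have hxy : (H ⊔ edge x y).Reachable x y := by
      rcases eq_or_ne x y with rfl | hne
      · rfl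
      · exact Adj.reachable (by simp [edge_adj, hne])
    have hle : H ≤ H ⊔ edge x y := le_sup_left
    rintro (h | ⟨h₁, h₂⟩ | ⟨h₁, h₂⟩)
    · exact h.mono hle
    · exact ((h₁.mono hle).trans hxy).trans (h₂.mono hle)
    · exact ((h₁.mono hle).trans hxy.symm).trans (h₂.mono hle)

lemma Reachable.sup_edge_exchange {H : SimpleGraph V} {a b x y u v : V}
    (huv : (H ⊔ edge x y).Reachable u v) (hab : ¬H.Reachable a b)
    (h : (H ⊔ edge x y).Reachable a b) : (H ⊔ edge a b).Reachable u v := by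
  rw [reachable_sup_edge_iff] at *
  grind [Reachable.trans, Reachable.symm]

lemma card_connectedComponent_sup_edge_add_one [Finite V] {H : SimpleGraph V} {x y : V}
    (hxy : ¬H.Reachable x y) :
    Nat.card (H ⊔ edge x y).ConnectedComponent + 1 = Nat.card H.ConnectedComponent := by
  -- every component of `H` survives except that of `x`, which merges into that of `y`
  let φ : {c : H.ConnectedComponent // c ≠ H.connectedComponentMk x} →
      (H ⊔ edge x y).ConnectedComponent := fun c ↦ c.1.map (Hom.ofLE le_sup_left)
  have hφ : φ.Bijective := by
    constructor
    · rintro ⟨c, hc⟩ ⟨d, hd⟩ h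
      induction c using ConnectedComponent.ind with | h u => ?_
      induction d using ConnectedComponent.ind with | h v => ?_
      simp only [φ, ConnectedComponent.map_mk, Hom.coe_ofLE, id, ConnectedComponent.eq,
        reachable_sup_edge_iff, Ne] at h hc hd
      simp only [Subtype.mk.injEq, ConnectedComponent.eq]
      grind [Reachable.symm]
    · intro c
      induction c using ConnectedComponent.ind with | h v => ?_
      by_cases hv : H.Reachable v x
      · refine ⟨⟨H.connectedComponentMk y, fun h ↦ hxy (ConnectedComponent.eq.mp h).symm⟩, ?_⟩
        simp only [φ, ConnectedComponent.map_mk, Hom.coe_ofLE, id, ConnectedComponent.eq,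
          reachable_sup_edge_iff]
        exact .inr (.inr ⟨.rfl, hv.symm⟩)
      · exact ⟨⟨H.connectedComponentMk v, fun h ↦ hv (ConnectedComponent.eq.mp h)⟩, rfl⟩
  classical
  have := Fintype.ofFinite H.ConnectedComponent
  have := Fintype.card_pos_iff.mpr ⟨H.connectedComponentMk x⟩
  rw [← Nat.card_congr (Equiv.ofBijective φ hφ), Nat.card_eq_fintype_card,
    Nat.card_eq_fintype_card, Fintype.card_subtype_compl, Fintype.card_subtype_eq]
  omega

lemma card_connectedComponent_bot :
    Nat.card (⊥ : SimpleGraph V).ConnectedComponent = Nat.card V :=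
  (Nat.card_eq_of_bijective _ ⟨fun _ _ h ↦ reachable_bot.mp (ConnectedComponent.eq.mp h),
    fun c ↦ c.exists_rep⟩).symm

theorem IsAcyclic.ncard_edgeSet_add_card_connectedComponent [Finite V] {F : SimpleGraph V}
    (hF : F.IsAcyclic) : F.edgeSet.ncard + Nat.card F.ConnectedComponent = Nat.card V := by
  induction h : F.edgeSet.ncard generalizing F with
  | zero =>
    rw [Set.ncard_eq_zero, edgeSet_eq_empty] at h
    rw [h, card_connectedComponent_bot, zero_add]
  | succ n ih =>
    obtain ⟨e, he⟩ := Set.nonempty_of_ncard_ne_zero (s := F.edgeSet) (by omega)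
    induction e with | h x y => ?_
    have hadj : F.Adj x y := he
    have hcard := card_connectedComponent_sup_edge_add_one <|
      isBridge_iff.mp (isAcyclic_iff_forall_adj_isBridge.mp hF hadj)
    rw [deleteEdges_sup_edge hadj] at hcard
    have := ih (hF.anti (deleteEdges_le _)) <| by
      rw [edgeSet_deleteEdges, Set.ncard_sdiff_singleton_of_mem he, h, Nat.add_sub_cancel]
    omega

lemma IsAcyclic.not_reachable_deleteEdges_of_mem_edges {F : SimpleGraph V} (hF : F.IsAcyclic)
    {a b : V} {p : F.Walk a b} (hp : p.IsPath) {e : Sym2 V} (he : e ∈ p.edges) :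
    ¬(F.deleteEdges {e}).Reachable a b := by
  intro hab
  obtain ⟨q, hq⟩ := hab.exists_isPath
  have hqF : ∀ f ∈ q.edges, f ∈ F.edgeSet := fun f hf ↦
    edgeSet_mono (deleteEdges_le _) (q.edges_subset_edgeSet hf)
  have hpq : p = q.transfer F hqF := congrArg Subtype.val <|
    (hF.subsingleton_path a b).elim ⟨p, hp⟩ ⟨_, hq.transfer hqF⟩
  rw [hpq, Walk.edges_transfer] at he
  simpa [edgeSet_deleteEdges] using q.edges_subset_edgeSet he

end SimpleGraph

open SimpleGraph

section

variable {V : Type*}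

lemma totalWeight_sup_edge [Finite V] (w : Sym2 V → ℝ) {H : SimpleGraph V} {a b : V}
    (hne : a ≠ b) (hab : ¬H.Adj a b) :
    totalWeight w (H ⊔ edge a b) = totalWeight w H + w s(a, b) := by
  rw [totalWeight, totalWeight, edgeSet_sup, edgeSet_edge_of_ne hne,
    finsum_mem_union (Set.disjoint_singleton_right.mpr (show s(a, b) ∉ H.edgeSet from hab))
      (Set.toFinite _) (Set.toFinite _), finsum_mem_singleton]

lemma edgeSet_leSub (w : Sym2 V → ℝ) (G : SimpleGraph V) (t : ℝ) :
    (leSub w G t).edgeSet = {e ∈ G.edgeSet | w e ≤ t} := by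
  rw [leSub, edgeSet_fromEdgeSet, sdiff_eq_left]
  exact Set.disjoint_left.mpr fun e he ↦ G.not_isDiag_of_mem_edgeSet he.1

lemma leSub_mono (w : Sym2 V → ℝ) {F G : SimpleGraph V} (h : F ≤ G) (t : ℝ) :
    leSub w F t ≤ leSub w G t := by
  rw [← edgeSet_subset_edgeSet, edgeSet_leSub, edgeSet_leSub]
  exact fun e he ↦ ⟨edgeSet_mono h he.1, he.2⟩

lemma leSub_le (w : Sym2 V → ℝ) (G : SimpleGraph V) (t : ℝ) : leSub w G t ≤ G := by
  rw [← edgeSet_subset_edgeSet, edgeSet_leSub]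
  exact Set.sep_subset _ _

lemma IsSpanningForest.ncard_edgeSet_add_card_connectedComponent [Finite V]
    {H F : SimpleGraph V} (hF : IsSpanningForest H F) :
    F.edgeSet.ncard + Nat.card H.ConnectedComponent = Nat.card V := by
  have hreach : F.Reachable = H.Reachable := funext₂ fun u v ↦ propext (hF.2.2 u v)
  rw [← hF.2.1.ncard_edgeSet_add_card_connectedComponent, ConnectedComponent,
    ConnectedComponent, hreach]

theorem IsMSF.weight_le_of_mem_edges [Finite V] {w : Sym2 V → ℝ} {G F : SimpleGraph V}
    (hF : IsMSF w G F) {a b : V} (hab : G.Adj a b) {p : F.Walk a b} (hp : p.IsPath)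
    {e : Sym2 V} (he : e ∈ p.edges) : w e ≤ w s(a, b) := by
  obtain ⟨⟨hFG, hFac, hFreach⟩, hmin⟩ := hF
  induction e with | h x y => ?_
  have hxy : F.Adj x y := p.adj_of_mem_edges he
  set H := F.deleteEdges {s(x, y)}
  have hHF : H ≤ F := deleteEdges_le _
  have hHab : ¬H.Reachable a b := hFac.not_reachable_deleteEdges_of_mem_edges hp he
  have hHxy : H ⊔ edge x y = F := deleteEdges_sup_edge hxy
  have hF'G : H ⊔ edge a b ≤ G := sup_le (hHF.trans hFG) ((edge_le_iff G).mpr (.inr hab))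
  have hF' : IsSpanningForest G (H ⊔ edge a b) := by
    refine ⟨hF'G, (hFac.anti hHF).sup_edge_of_not_reachable hHab,
      fun u v ↦ ⟨fun h ↦ h.mono hF'G, fun h ↦ ?_⟩⟩
    rw [← hFreach, ← hHxy] at h
    exact h.sup_edge_exchange hHab (hHxy ▸ (hFreach a b).mpr hab.reachable)
  have hweight := hmin _ hF'
  rw [← hHxy, totalWeight_sup_edge w hxy.ne (by simp [H]),
    totalWeight_sup_edge w hab.ne fun h ↦ hHab h.reachable] at hweight
  linarith

theorem IsMSF.isSpanningForest_leSub [Finite V] {w : Sym2 V → ℝ} {G F : SimpleGraph V}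
    (hF : IsMSF w G F) (t : ℝ) : IsSpanningForest (leSub w G t) (leSub w F t) := by
  refine ⟨leSub_mono w hF.1.1 t, hF.1.2.1.anti (leSub_le w F t),
    fun u v ↦ ⟨fun h ↦ h.mono (leSub_mono w hF.1.1 t), Reachable.of_forall_adj ?_⟩⟩
  intro a b hab
  obtain ⟨⟨hab, hwt⟩, -⟩ := (fromEdgeSet_adj _).mp hab
  obtain ⟨p, hp⟩ := ((hF.1.2.2 a b).mpr hab.reachable).exists_isPath
  refine ⟨p.transfer _ fun e he ↦ ?_⟩
  rw [edgeSet_leSub]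
  exact ⟨p.edges_subset_edgeSet he, (hF.weight_le_of_mem_edges hab hp he).trans hwt⟩

end

theorem msf_threshold_size {V : Type*} [Fintype V] (G : SimpleGraph V) (w : Sym2 V → ℝ)
    (F : SimpleGraph V) (hF : IsMSF w G F) (t : ℝ) :
    {e ∈ F.edgeSet | w e ≤ t}.ncard =
      Fintype.card V - Nat.card (leSub w G t).ConnectedComponent ∧
    IsSpanningForest (leSub w G t) (leSub w F t) := by
  have hSF := hF.isSpanningForest_leSub t
  have hcount := hSF.ncard_edgeSet_add_card_connectedComponent
  rw [edgeSet_leSub, Nat.card_eq_fintype_card (α := V)] at hcount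
  exact ⟨by omega, hSF⟩
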